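/- arXiv:math/0609013 — 3 statements merged into one kernel-verified Lean document; each statement's English description precedes it below -/
import Mathlib

section
/- Let m>0 and ω∈ℝ with ω≠0 and |ω|≠m, and let k(z)=√(z²−m²) be the branch with Im k(z)>0 for Im z>0. Then lim_{ε→0+} ε·∫_ℝ(|∂_x e^{ik(ω+iε)|x|}|² + m²|e^{ik(ω+iε)|x|}|²)dx = n(ω), where n(ω)=|ω|·√(ω²−m²) if |ω|>m and n(ω)=0 if |ω|<m. -/
/-! With `κ = k(ω+iε)` one has `|e^{iκ|x|}|² = e^{-2 Im κ |x|}`, so the weighted norm equals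
`ε (|κ|² + m²) / Im κ`. Comparing imaginary parts in `κ² = (ω+iε)² − m²` gives `Re κ · Im κ = ωε`,
so `ε / Im κ = |Re κ| / |ω|`, and `|κ|² = |κ²|`, `|Re κ| = √((|κ²| + Re κ²)/2)` are continuous in
`κ² = z² − m²`, including at real `z = ω`. There `|κ|² + m² = ω²` when `|ω| > m`, and `|Re κ|` tends to
`√(ω² − m²)` or to `0` according as `|ω| > m` or `|ω| < m`. -/

open MeasureTheory Filter
open scoped ENNReal Topology

noncomputable section

/-- The branch `k(z) = √(z²−m²)` with `Im k(z) > 0` for `Im z > 0`, realized as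
`k(z) = i(m²−z²)^{1/2}` with the principal power. -/
def kBr (m : ℝ) (z : ℂ) : ℂ := Complex.I * (((m:ℂ)^2 - z^2) ^ ((1:ℂ)/2))

open Complex

theorem integral_exp_neg_mul_abs {c : ℝ} (hc : 0 < c) :
    ∫ x : ℝ, Real.exp (-(c * |x|)) = 2 / c := by
  have h := integral_comp_mul_left_Ioi (fun t => Real.exp (-t)) 0 hc
  rw [mul_zero, integral_exp_neg_Ioi_zero] at h
  rw [integral_comp_abs (f := fun t => Real.exp (-(c * t))), h, smul_eq_mul, mul_one, div_eq_mul_inv]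

theorem norm_add_re_pos_of_mem_slitPlane {ζ : ℂ} (hζ : ζ ∈ slitPlane) : 0 < ‖ζ‖ + ζ.re := by
  rcases mem_slitPlane_iff.mp hζ with hre | him
  · linarith [norm_nonneg ζ]
  · linarith [neg_abs_le ζ.re, abs_re_lt_norm.mpr him]

theorem sq_sub_sq_mem_slitPlane (m : ℝ) {z : ℂ} (hz : 0 < z.im) :
    (m : ℂ) ^ 2 - z ^ 2 ∈ slitPlane := by
  rw [mem_slitPlane_iff]
  by_cases hre : z.re = 0
  · left
    simp only [sub_re, sq, mul_re, hre, ofReal_re, ofReal_im]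
    nlinarith
  · right
    simp only [sub_im, sq, mul_im, ofReal_re, ofReal_im]
    intro h
    exact hre (by nlinarith [mul_self_nonneg z.re, mul_pos hz hz])

theorem kBr_im_pos (m : ℝ) {z : ℂ} (hz : 0 < z.im) : 0 < (kBr m z).im := by
  rw [kBr, I_mul_im, one_div, cpow_inv_two_re]
  exact Real.sqrt_pos.mpr (half_pos (norm_add_re_pos_of_mem_slitPlane (sq_sub_sq_mem_slitPlane m hz)))

theorem kBr_sq (m : ℝ) (z : ℂ) : kBr m z ^ 2 = z ^ 2 - (m : ℂ) ^ 2 := by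
  rw [kBr, mul_pow, one_div, cpow_ofNat_inv_pow, I_sq]
  ring

theorem abs_re_eq_sqrt (κ : ℂ) : |κ.re| = √((‖κ ^ 2‖ + (κ ^ 2).re) / 2) := by
  rw [norm_pow, Complex.sq_norm, normSq_apply, ← Real.sqrt_sq_eq_abs]
  congr 1
  simp only [sq, mul_re]
  ring

theorem re_mul_im_eq_of_sq_eq {κ z : ℂ} {c : ℝ} (h : κ ^ 2 = z ^ 2 - c) :
    κ.re * κ.im = z.re * z.im := by
  have := congrArg im h
  simp only [sq, mul_im, sub_im, ofReal_im] at this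
  linarith

theorem norm_exp_I_mul_mul_abs_sq (κ : ℂ) (x : ℝ) :
    ‖exp (I * κ * ((|x| : ℝ) : ℂ))‖ ^ 2 = Real.exp (-(2 * κ.im * |x|)) := by
  rw [norm_exp, ← Real.exp_nat_mul]
  congr 1
  simp only [Nat.cast_ofNat, mul_re, I_re, zero_mul, I_im, one_mul, zero_sub, ofReal_re, neg_mul,
    mul_im, zero_add, ofReal_im, mul_zero, sub_zero, mul_neg, neg_inj]
  ring

theorem integral_outgoing_wave_H1 {κ : ℂ} (hκ : 0 < κ.im) (a : ℝ) :
    ∫ x : ℝ, (‖I * κ * ((Real.sign x : ℝ) : ℂ) * exp (I * κ * ((|x| : ℝ) : ℂ))‖ ^ 2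
        + a * ‖exp (I * κ * ((|x| : ℝ) : ℂ))‖ ^ 2) = (‖κ‖ ^ 2 + a) / κ.im := by
  have hae : ∀ᵐ x : ℝ, ‖I * κ * ((Real.sign x : ℝ) : ℂ) * exp (I * κ * ((|x| : ℝ) : ℂ))‖ ^ 2
        + a * ‖exp (I * κ * ((|x| : ℝ) : ℂ))‖ ^ 2 = (‖κ‖ ^ 2 + a) * Real.exp (-(2 * κ.im * |x|)) := by
    filter_upwards [Measure.ae_ne volume 0] with x hx
    have hsign : |Real.sign x| = 1 := by
      rcases Real.sign_apply_eq_of_ne_zero x hx with h | h <;> simp [h]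
    rw [norm_mul, mul_pow, norm_exp_I_mul_mul_abs_sq, norm_mul, norm_real, Real.norm_eq_abs,
      hsign, norm_mul, norm_I]
    ring
  rw [integral_congr_ae hae, integral_const_mul, integral_exp_neg_mul_abs (by positivity)]
  field_simp

/-- `ε ‖e^{ik(z)|x|}‖²_{H¹}` at `z = ω + iε`, expressed through `k(z)² = z² − m²` alone, so that it
stays continuous across the real axis, where `k` itself jumps. -/
def weightedH1Norm (m : ℝ) (z : ℂ) : ℝ :=
  (‖z ^ 2 - (m : ℂ) ^ 2‖ + m ^ 2) * √((‖z ^ 2 - (m : ℂ) ^ 2‖ + (z ^ 2 - (m : ℂ) ^ 2).re) / 2)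
    / |z.re|

theorem mul_integral_eq_weightedH1Norm (m : ℝ) {ω ε : ℝ} (hω : ω ≠ 0) (hε : 0 < ε) :
    ε * ∫ x : ℝ,
        (‖I * kBr m ((ω : ℂ) + I * (ε : ℂ)) * ((Real.sign x : ℝ) : ℂ)
            * exp (I * kBr m ((ω : ℂ) + I * (ε : ℂ)) * ((|x| : ℝ) : ℂ))‖ ^ 2
          + m ^ 2 * ‖exp (I * kBr m ((ω : ℂ) + I * (ε : ℂ)) * ((|x| : ℝ) : ℂ))‖ ^ 2)
      = weightedH1Norm m ((ω : ℂ) + I * (ε : ℂ)) := by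
  set z : ℂ := (ω : ℂ) + I * (ε : ℂ)
  set κ := kBr m z
  have hz_re : z.re = ω := by simp [z]
  have hz_im : z.im = ε := by simp [z]
  have hκ : 0 < κ.im := kBr_im_pos m (hz_im ▸ hε)
  have hsq : κ ^ 2 = z ^ 2 - (m : ℂ) ^ 2 := kBr_sq m z
  have hprod : |κ.re| * κ.im = |ω| * ε := by
    rw [← abs_of_pos hκ, ← abs_of_pos hε, ← abs_mul, ← abs_mul, ← hz_re, ← hz_im]
    exact congrArg abs (re_mul_im_eq_of_sq_eq (c := m ^ 2) (by push_cast; exact hsq))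
  rw [integral_outgoing_wave_H1 hκ, weightedH1Norm, ← hsq, ← abs_re_eq_sqrt, norm_pow, hz_re]
  field_simp
  linear_combination -(‖κ‖ ^ 2 + m ^ 2) * hprod

theorem weightedH1Norm_ofReal (m : ℝ) {ω : ℝ} (hω : ω ≠ 0) :
    weightedH1Norm m ω = |ω| * √(ω ^ 2 - m ^ 2) := by
  have hcast : (ω : ℂ) ^ 2 - (m : ℂ) ^ 2 = ((ω ^ 2 - m ^ 2 : ℝ) : ℂ) := by push_cast; ring
  rw [weightedH1Norm, hcast, norm_real, Real.norm_eq_abs, ofReal_re, ofReal_re]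
  have hω' : 0 < |ω| := abs_pos.mpr hω
  rcases le_or_gt 0 (ω ^ 2 - m ^ 2) with ha | ha
  · rw [abs_of_nonneg ha, add_self_div_two, sub_add_cancel, ← sq_abs ω]
    field_simp
  · rw [abs_of_neg ha, neg_add_cancel, zero_div, Real.sqrt_zero, Real.sqrt_eq_zero'.mpr ha.le]
    simp

theorem continuousAt_weightedH1Norm (m : ℝ) {z : ℂ} (hz : z.re ≠ 0) :
    ContinuousAt (weightedH1Norm m) z := by
  unfold weightedH1Norm
  fun_prop (disch := exact abs_ne_zero.mpr hz)

theorem weighted_H1_norm_limit_general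
    (m : ℝ) (ω : ℝ) (hω : ω ≠ 0) :
    Tendsto (fun ε : ℝ => ε * ∫ x : ℝ,
        (‖Complex.I * kBr m ((ω : ℂ) + Complex.I * (ε : ℂ)) * ((Real.sign x : ℝ) : ℂ)
            * Complex.exp (Complex.I * kBr m ((ω : ℂ) + Complex.I * (ε : ℂ))
                * ((|x| : ℝ) : ℂ))‖^2
          + m^2 * ‖Complex.exp (Complex.I * kBr m ((ω : ℂ) + Complex.I * (ε : ℂ))
                * ((|x| : ℝ) : ℂ))‖^2))
      (𝓝[>] (0:ℝ))
      (𝓝 (if m < |ω| then |ω| * Real.sqrt (ω^2 - m^2) else 0)) := by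
  have hpath : Tendsto (fun ε : ℝ => (ω : ℂ) + I * (ε : ℂ)) (𝓝[>] 0) (𝓝 (ω : ℂ)) := by
    have hcont : Continuous (fun ε : ℝ => (ω : ℂ) + I * (ε : ℂ)) := by fun_prop
    simpa using (hcont.tendsto 0).mono_left nhdsWithin_le_nhds
  have hlim := ((continuousAt_weightedH1Norm m (by simpa using hω)).tendsto.comp hpath)
  have hvalue : weightedH1Norm m ω = if m < |ω| then |ω| * √(ω ^ 2 - m ^ 2) else 0 := by
    rw [weightedH1Norm_ofReal m hω]
    split_ifs with h
    · rfl
    · rw [Real.sqrt_eq_zero'.mpr (by nlinarith [sq_abs ω, abs_nonneg ω]), mul_zero]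
  rw [hvalue] at hlim
  refine hlim.congr' ?_
  filter_upwards [self_mem_nhdsWithin] with ε hε
  exact (mul_integral_eq_weightedH1Norm m hω hε).symm

/-- `lim_{ε→0+} ε‖e^{ik(ω+iε)|x|}‖²_{H¹} = n(ω)`, where `n(ω)=|ω|√(ω²−m²)`
for `|ω|>m` and `n(ω)=0` for `|ω|<m`. -/
theorem weighted_H1_norm_limit
    (m : ℝ) (hm : 0 < m) (ω : ℝ) (hω : ω ≠ 0) (hωm : |ω| ≠ m) :
    Tendsto (fun ε : ℝ => ε * ∫ x : ℝ,
        (‖Complex.I * kBr m ((ω : ℂ) + Complex.I * (ε : ℂ)) * ((Real.sign x : ℝ) : ℂ)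
            * Complex.exp (Complex.I * kBr m ((ω : ℂ) + Complex.I * (ε : ℂ))
                * ((|x| : ℝ) : ℂ))‖^2
          + m^2 * ‖Complex.exp (Complex.I * kBr m ((ω : ℂ) + Complex.I * (ε : ℂ))
                * ((|x| : ℝ) : ℂ))‖^2))
      (𝓝[>] (0:ℝ))
      (𝓝 (if m < |ω| then |ω| * Real.sqrt (ω^2 - m^2) else 0)) :=
  weighted_H1_norm_limit_general m ω hω
end
end

section
/- Let m>0 and let κ∈ℂ with Im κ>0 and Re κ≠0. Then (2|κ|²/π)·∫_ℝ (k²+m²)/|κ²−k²|² dk = −4·Im[ (κ²+m²)·conj(κ) / (κ²−conj(κ)²) ]. -/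
/-!
Write `κ = a + b i`. Then `‖κ² - k²‖² = ((k - a)² + b²) ((k + a)² + b²)`, and partial fractions
give an explicit primitive of the integrand: a multiple of
`log (((k - a)² + b²) / ((k + a)² + b²))`, which vanishes at both ends of the line, plus a
multiple of `arctan ((k - a) / b) + arctan ((k + a) / b)`, which increases by `2π`. Hence the
integral is `π (|κ|² + m²) / (2 b |κ|²)`. On the right, `κ² - conj κ² = 4 a b i`, so the
imaginary part is `-(|κ|² + m²) / (4 b)`.
-/

open MeasureTheory Filter Topology Bornology Real ComplexConjugate

theorem integrable_of_hasDerivAt_of_nonneg {f f' : ℝ → ℝ} {a b : ℝ}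
    (hderiv : ∀ x, HasDerivAt f (f' x) x) (hf' : ∀ x, 0 ≤ f' x)
    (hbot : Tendsto f atBot (𝓝 a)) (htop : Tendsto f atTop (𝓝 b)) : Integrable f' := by
  have hint : ∀ x y, IntervalIntegrable f' volume x y := fun x y =>
    intervalIntegral.intervalIntegrable_deriv_of_nonneg
      (fun z _ => (hderiv z).continuousAt.continuousWithinAt) (fun z _ => hderiv z)
      (fun z _ => hf' z)
  refine integrable_of_intervalIntegral_norm_tendsto (b - a)
    (fun i => (hint (-i) i).1) tendsto_neg_atTop_atBot tendsto_id ?_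
  have hftc : ∀ i : ℝ, ∫ x in -i..i, ‖f' x‖ = f i - f (-i) := fun i => by
    simp only [Real.norm_of_nonneg (hf' _)]
    exact intervalIntegral.integral_eq_sub_of_hasDerivAt (fun x _ => hderiv x) (hint _ _)
  simpa only [hftc, Function.comp_def] using htop.sub (hbot.comp tendsto_neg_atTop_atBot)

theorem integral_of_hasDerivAt_of_nonneg {f f' : ℝ → ℝ} {a b : ℝ}
    (hderiv : ∀ x, HasDerivAt f (f' x) x) (hf' : ∀ x, 0 ≤ f' x)
    (hbot : Tendsto f atBot (𝓝 a)) (htop : Tendsto f atTop (𝓝 b)) : ∫ x, f' x = b - a :=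
  integral_of_hasDerivAt_of_tendsto hderiv (integrable_of_hasDerivAt_of_nonneg hderiv hf' hbot htop)
    hbot htop

lemma hasDerivAt_log_sub_sq_add_sq (c : ℝ) {b : ℝ} (hb : b ≠ 0) (k : ℝ) :
    HasDerivAt (fun k : ℝ => log ((k - c) ^ 2 + b ^ 2))
      (2 * (k - c) / ((k - c) ^ 2 + b ^ 2)) k := by
  have h := ((((hasDerivAt_id' k).sub_const c).fun_pow 2).add_const (b ^ 2)).log
    (by positivity : (k - c) ^ 2 + b ^ 2 ≠ 0)
  convert h using 1
  push_cast
  ring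

lemma hasDerivAt_arctan_sub_div (c : ℝ) {b : ℝ} (hb : b ≠ 0) (k : ℝ) :
    HasDerivAt (fun k : ℝ => arctan ((k - c) / b)) (b / ((k - c) ^ 2 + b ^ 2)) k := by
  convert (((hasDerivAt_id' k).sub_const c).div_const b).arctan using 1
  field_simp
  ring

lemma tendsto_arctan_sub_div_atTop (c : ℝ) {b : ℝ} (hb : 0 < b) :
    Tendsto (fun k : ℝ => arctan ((k - c) / b)) atTop (𝓝 (π / 2)) :=
  (tendsto_arctan_atTop.mono_right nhdsWithin_le_nhds).comp
    ((tendsto_atTop_add_const_right _ (-c) tendsto_id).atTop_div_const hb)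

lemma tendsto_arctan_sub_div_atBot (c : ℝ) {b : ℝ} (hb : 0 < b) :
    Tendsto (fun k : ℝ => arctan ((k - c) / b)) atBot (𝓝 (-(π / 2))) :=
  (tendsto_arctan_atBot.mono_right nhdsWithin_le_nhds).comp
    ((tendsto_atBot_add_const_right _ (-c) tendsto_id).atBot_div_const hb)

lemma tendsto_log_sub_log_cobounded (a : ℝ) {b : ℝ} (hb : b ≠ 0) :
    Tendsto (fun k : ℝ => log ((k - a) ^ 2 + b ^ 2) - log ((k + a) ^ 2 + b ^ 2))
      (cobounded ℝ) (𝓝 0) := by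
  -- in the variable `t = k⁻¹` the ratio of the two arguments is continuous at `t = 0`
  set g : ℝ → ℝ := fun t =>
    log (((1 - a * t) ^ 2 + (b * t) ^ 2) / ((1 + a * t) ^ 2 + (b * t) ^ 2))
  have hg : Tendsto g (𝓝 0) (𝓝 0) := by
    have : ContinuousAt g 0 := by
      apply ContinuousAt.log <;> [fun_prop (disch := norm_num); norm_num]
    simpa [g] using this.tendsto
  refine (hg.comp tendsto_inv₀_cobounded).congr' ?_
  filter_upwards [tendsto_inv₀_cobounded'.eventually self_mem_nhdsWithin] with k hk
  have hk : k ≠ 0 := by simpa using hk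
  rw [← log_div (by positivity) (by positivity)]
  simp only [Function.comp, g]
  congr 1
  field_simp

noncomputable def logArctanPrimitive (m a b k : ℝ) : ℝ :=
  (a ^ 2 + b ^ 2 - m ^ 2) / (8 * a * (a ^ 2 + b ^ 2)) *
      (log ((k - a) ^ 2 + b ^ 2) - log ((k + a) ^ 2 + b ^ 2)) +
    (a ^ 2 + b ^ 2 + m ^ 2) / (4 * b * (a ^ 2 + b ^ 2)) *
      (arctan ((k - a) / b) + arctan ((k + a) / b))

lemma hasDerivAt_logArctanPrimitive (m : ℝ) {a b : ℝ} (ha : a ≠ 0) (hb : b ≠ 0) (k : ℝ) :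
    HasDerivAt (logArctanPrimitive m a b)
      ((k ^ 2 + m ^ 2) / (((k - a) ^ 2 + b ^ 2) * ((k + a) ^ 2 + b ^ 2))) k := by
  have hlog := (hasDerivAt_log_sub_sq_add_sq a hb k).fun_sub
    (hasDerivAt_log_sub_sq_add_sq (-a) hb k)
  have harctan := (hasDerivAt_arctan_sub_div a hb k).fun_add
    (hasDerivAt_arctan_sub_div (-a) hb k)
  simp only [sub_neg_eq_add] at hlog harctan
  refine ((hlog.const_mul _).fun_add (harctan.const_mul _)).congr_deriv ?_
  have h₁ : (k - a) ^ 2 + b ^ 2 ≠ 0 := by positivity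
  have h₂ : (k + a) ^ 2 + b ^ 2 ≠ 0 := by positivity
  have h₃ : a ^ 2 + b ^ 2 ≠ 0 := by positivity
  field_simp
  ring

lemma tendsto_logArctanPrimitive_atTop (m a : ℝ) {b : ℝ} (hb : 0 < b) :
    Tendsto (logArctanPrimitive m a b) atTop
      (𝓝 (π * (a ^ 2 + b ^ 2 + m ^ 2) / (4 * b * (a ^ 2 + b ^ 2)))) := by
  have hlog := (tendsto_log_sub_log_cobounded a hb.ne').mono_left
    IsOrderBornology.atTop_le_cobounded
  have harctan := (tendsto_arctan_sub_div_atTop a hb).add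
    (by simpa using tendsto_arctan_sub_div_atTop (-a) hb)
  have h : Tendsto (logArctanPrimitive m a b) _ (𝓝 (_ * 0 + _ * (π / 2 + π / 2))) :=
    (hlog.const_mul _).add (harctan.const_mul _)
  convert h using 2
  ring

lemma tendsto_logArctanPrimitive_atBot (m a : ℝ) {b : ℝ} (hb : 0 < b) :
    Tendsto (logArctanPrimitive m a b) atBot
      (𝓝 (-(π * (a ^ 2 + b ^ 2 + m ^ 2) / (4 * b * (a ^ 2 + b ^ 2))))) := by
  have hlog := (tendsto_log_sub_log_cobounded a hb.ne').mono_left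
    IsOrderBornology.atBot_le_cobounded
  have harctan := (tendsto_arctan_sub_div_atBot a hb).add
    (by simpa using tendsto_arctan_sub_div_atBot (-a) hb)
  have h : Tendsto (logArctanPrimitive m a b) _ (𝓝 (_ * 0 + _ * (-(π / 2) + -(π / 2)))) :=
    (hlog.const_mul _).add (harctan.const_mul _)
  convert h using 2
  ring

theorem integral_sq_add_sq_div_mul_sq_add_sq (m : ℝ) {a b : ℝ} (ha : a ≠ 0) (hb : 0 < b) :
    ∫ k : ℝ, (k ^ 2 + m ^ 2) / (((k - a) ^ 2 + b ^ 2) * ((k + a) ^ 2 + b ^ 2))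
      = π * (a ^ 2 + b ^ 2 + m ^ 2) / (2 * b * (a ^ 2 + b ^ 2)) := by
  rw [integral_of_hasDerivAt_of_nonneg (hasDerivAt_logArctanPrimitive m ha hb.ne')
    (fun k => by positivity) (tendsto_logArctanPrimitive_atBot m a hb)
    (tendsto_logArctanPrimitive_atTop m a hb)]
  have hr : a ^ 2 + b ^ 2 ≠ 0 := by positivity
  field_simp
  ring

lemma norm_sq_sub_ofReal_sq_sq (κ : ℂ) (k : ℝ) :
    ‖κ ^ 2 - (k : ℂ) ^ 2‖ ^ 2 = ((k - κ.re) ^ 2 + κ.im ^ 2) * ((k + κ.re) ^ 2 + κ.im ^ 2) := by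
  rw [sq_sub_sq, norm_mul, mul_pow, Complex.sq_norm, Complex.sq_norm, Complex.normSq_apply,
    Complex.normSq_apply]
  simp only [Complex.sub_re, Complex.sub_im, Complex.add_re, Complex.add_im, Complex.ofReal_re,
    Complex.ofReal_im]
  ring

lemma sq_sub_conj_sq (κ : ℂ) : κ ^ 2 - conj κ ^ 2 = (4 * κ.re * κ.im : ℝ) * Complex.I := by
  apply Complex.ext <;> simp [pow_two]; ring

lemma im_mul_conj_div_sq_sub_conj_sq (m : ℝ) {κ : ℂ} (hκ : κ.re ≠ 0) :
    ((κ ^ 2 + (m : ℂ) ^ 2) * conj κ / (κ ^ 2 - conj κ ^ 2)).im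
      = -(Complex.normSq κ + m ^ 2) / (4 * κ.im) := by
  have hre : ((κ ^ 2 + (m : ℂ) ^ 2) * conj κ).re = κ.re * (Complex.normSq κ + m ^ 2) := by
    simp [pow_two, Complex.normSq_apply]; ring
  rw [sq_sub_conj_sq, div_mul_eq_div_div_swap, Complex.div_I, Complex.div_ofReal_im,
    Complex.neg_im, Complex.mul_I_im, hre]
  field_simp

theorem contour_integral_identity_general
    (m : ℝ) (κ : ℂ) (hκim : 0 < κ.im) (hκre : κ.re ≠ 0) :
    (2 * ‖κ‖^2 / Real.pi)
        * ∫ k : ℝ, (k^2 + m^2) / ‖κ^2 - (k:ℂ)^2‖^2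
      = -4 * (((κ^2 + ((m:ℂ))^2) * (starRingEnd ℂ) κ
          / (κ^2 - ((starRingEnd ℂ) κ)^2)).im) := by
  simp only [norm_sq_sub_ofReal_sq_sq]
  rw [integral_sq_add_sq_div_mul_sq_add_sq m hκre hκim, im_mul_conj_div_sq_sub_conj_sq m hκre,
    Complex.sq_norm, Complex.normSq_apply]
  have hnormSq : 0 < κ.re * κ.re + κ.im * κ.im :=
    add_pos_of_nonneg_of_pos (mul_self_nonneg _) (mul_pos hκim hκim)
  field_simp

/-- the contour-integral identity
`(2|κ|²/π)∫_ℝ (k²+m²)/|κ²−k²|² dk = −4 Im[(κ²+m²) conj(κ)/(κ²−conj(κ)²)]`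
for `Im κ > 0`, `Re κ ≠ 0`. -/
theorem contour_integral_identity
    (m : ℝ) (hm : 0 < m) (κ : ℂ) (hκim : 0 < κ.im) (hκre : κ.re ≠ 0) :
    (2 * ‖κ‖^2 / Real.pi)
        * ∫ k : ℝ, (k^2 + m^2) / ‖κ^2 - (k:ℂ)^2‖^2
      = -4 * (((κ^2 + ((m:ℂ))^2) * (starRingEnd ℂ) κ
          / (κ^2 - ((starRingEnd ℂ) κ)^2)).im) :=
  contour_integral_identity_general m κ hκim hκre
end

section
/- Let m>0 and define J₀(z)=(1/π)∫₀^π cos(z·sin θ)dθ for z∈ℝ (the Bessel function of order zero). Then the function B(x,t)=J₀(m√(t²−x²)), defined on the open region {(x,t): |x|<t}, is smooth there, and for every pair of nonnegative integers j,κ̃ there exists a constant C (depending only on j, κ̃, m) such that |∂_x^j ∂_t^{κ̃} B(x,t)| ≤ C·(1+t)^{j+κ̃} for all (x,t) with |x|<t. -/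
open MeasureTheory Filter
open scoped ENNReal Topology

noncomputable section
namespace BesselAux

/-- coefficients of `cos √·` -/
def cseq : ℕ → ℝ := fun n => (-1)^n / (2*n).factorial

def cps : FormalMultilinearSeries ℝ ℝ ℝ := FormalMultilinearSeries.ofScalars ℝ cseq

def c : ℝ → ℝ := cps.sum

lemma cseq_norm (n : ℕ) : ‖cseq n‖ = 1 / (2*n).factorial := by
  simp [cseq, abs_div, abs_pow]

lemma cps_radius : cps.radius = ⊤ := by
  apply FormalMultilinearSeries.ofScalars_radius_eq_top_of_tendsto
  · exact Eventually.of_forall fun n => by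
      simp [cseq]
      positivity
  · apply squeeze_zero (fun n => by positivity)
      (g := fun n : ℕ => 1 / (n+1 : ℝ))
    · intro n
      rw [cseq_norm, cseq_norm]
      have h1 : (2*(n+1)).factorial = (2*n+2) * ((2*n+1) * (2*n).factorial) := by
        have h2 : 2*(n+1) = (2*n+1) + 1 := by ring
        rw [h2, Nat.factorial_succ, Nat.factorial_succ]
      have h3 : (0:ℝ) < (2*n).factorial := by exact_mod_cast Nat.factorial_pos _
      rw [Nat.succ_eq_add_one, h1]
      push_cast
      rw [div_le_div_iff₀ (by positivity) (by positivity), one_mul,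
        div_mul_eq_mul_div, one_mul, div_le_div_iff₀ (by positivity) h3, one_mul]
      have h4 : ((n:ℝ)+1) ≤ (2*n+2)*(2*n+1) := by nlinarith [Nat.cast_nonneg (α := ℝ) n]
      nlinarith [mul_le_mul_of_nonneg_right h4 h3.le]
    · exact tendsto_one_div_add_atTop_nhds_zero_nat

lemma c_hasFPS : HasFPowerSeriesOnBall c cps 0 ⊤ := by
  have := cps.hasFPowerSeriesOnBall (by rw [cps_radius]; exact ENNReal.zero_lt_top)
  rwa [cps_radius] at this

lemma c_hasSum (y : ℝ) : HasSum (fun n => cseq n * y^n) (c y) := by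
  have h := c_hasFPS.hasSum (y := y) (by simp)
  rw [zero_add] at h
  have h2 : (fun n => cps n (fun _ => y)) = fun n => cseq n * y^n := by
    funext n
    rw [cps, FormalMultilinearSeries.ofScalars_apply_eq, smul_eq_mul]
  rwa [h2] at h

lemma c_analytic : AnalyticOnNhd ℝ c Set.univ := by
  have := c_hasFPS.analyticOnNhd
  simpa using this

lemma c_contDiff : ContDiff ℝ (⊤ : ℕ∞) c := c_analytic.contDiff

lemma c_sq (y : ℝ) : c (y^2) = Real.cos y := by
  refine HasSum.unique (c_hasSum (y^2)) ?_
  have := Real.hasSum_cos y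
  convert this using 2 with n
  rw [cseq, pow_mul]
  ring

lemma c_eq_cos_sqrt {s : ℝ} (hs : 0 ≤ s) : c s = Real.cos (Real.sqrt s) := by
  rw [← c_sq (Real.sqrt s), Real.sq_sqrt hs]


def ev1 : ℝ × ℕ × Bool → ℝ → ℝ := fun e s =>
  if e.2.2 then e.1 * Real.cos (Real.sqrt s) * (s⁻¹) ^ (e.2.1+1)
  else e.1 * Real.sin (Real.sqrt s) * (Real.sqrt s)⁻¹ * (s⁻¹) ^ e.2.1

def evL (l : List (ℝ × ℕ × Bool)) (s : ℝ) : ℝ := (l.map (fun e => ev1 e s)).sum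

def d1 : ℝ × ℕ × Bool → List (ℝ × ℕ × Bool) := fun e =>
  if e.2.2 then [(-e.1/2, e.2.1+1, false), (-((e.2.1:ℝ)+1) * e.1, e.2.1+1, true)]
  else [(e.1/2, e.2.1, true), (-(1/2 + (e.2.1:ℝ)) * e.1, e.2.1+1, false)]

lemma ev1_hasDeriv (e : ℝ × ℕ × Bool) {s : ℝ} (hs : 0 < s) :
    HasDerivAt (fun s' => ev1 e s') (evL (d1 e) s) s := by
  obtain ⟨co, a, b⟩ := e
  obtain ⟨v, hv, rfl⟩ : ∃ v : ℝ, 0 < v ∧ s = v*v :=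
    ⟨Real.sqrt s, Real.sqrt_pos.mpr hs, (Real.mul_self_sqrt hs.le).symm⟩
  have hsv : Real.sqrt (v*v) = v := Real.sqrt_mul_self hv.le
  have h0 : v*v ≠ 0 := hs.ne'
  have hu0 : Real.sqrt (v*v) ≠ 0 := (Real.sqrt_pos.mpr hs).ne'
  have hv0 : v ≠ 0 := hv.ne'
  have hsq : HasDerivAt Real.sqrt (1/(2*v)) (v*v) := by
    have := Real.hasDerivAt_sqrt h0
    rwa [hsv] at this
  have hcos : HasDerivAt (fun s' => Real.cos (Real.sqrt s'))
      (-Real.sin v * (1/(2*v))) (v*v) := by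
    have := (hsv ▸ Real.hasDerivAt_cos v).comp _ hsq
    simpa [hsv, Function.comp_def] using this
  have hsin : HasDerivAt (fun s' => Real.sin (Real.sqrt s'))
      (Real.cos v * (1/(2*v))) (v*v) := by
    have := (hsv ▸ Real.hasDerivAt_sin v).comp _ hsq
    simpa [hsv, Function.comp_def] using this
  have hinv : HasDerivAt (fun s' => (Real.sqrt s')⁻¹)
      (-(1/(2*v)) / v^2) (v*v) := by
    have := hsq.inv hu0
    rwa [hsv] at this
  have hzp : ∀ k : ℕ, HasDerivAt (fun s' : ℝ => (s'⁻¹) ^ k)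
      ((k : ℝ) * ((v*v)⁻¹)^(k-1) * (-((v*v)^2)⁻¹)) (v*v) := fun k => (hasDerivAt_inv h0).pow k
  cases b with
  | true =>
    have H := ((hcos.mul (hzp (a+1))).const_mul co)
    simp only [Pi.mul_apply, ← mul_assoc, Nat.add_sub_cancel] at H
    refine H.congr_deriv ?_
    simp only [evL, d1, ev1, List.map, List.sum_cons, List.sum_nil, if_true, if_false,
        Bool.false_eq_true, add_zero]
    push_cast
    rw [hsv]
    simp only [inv_pow]
    field_simp
    ring
  | false =>
    have H := (((hsin.mul hinv).mul (hzp a)).const_mul co)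
    simp only [Pi.mul_apply, ← mul_assoc] at H
    refine H.congr_deriv ?_
    simp only [evL, d1, ev1, List.map, List.sum_cons, List.sum_nil, if_true, if_false,
        Bool.false_eq_true, add_zero]
    push_cast
    rw [hsv]
    rcases Nat.eq_zero_or_pos a with ha | ha
    · subst ha
      simp only [inv_pow]
      field_simp
      ring
    · obtain ⟨a', rfl⟩ : ∃ a', a = a' + 1 := ⟨a - 1, (Nat.succ_pred_eq_of_pos ha).symm⟩
      simp only [Nat.add_sub_cancel]
      push_cast
      simp only [inv_pow]
      field_simp
      ring


lemma evL_hasDeriv (l : List (ℝ × ℕ × Bool)) {s : ℝ} (hs : 0 < s) :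
    HasDerivAt (fun s' => evL l s') (evL (l.flatMap d1) s) s := by
  induction l with
  | nil => simpa [evL] using hasDerivAt_const s (0:ℝ)
  | cons e l ih =>
    have h := (ev1_hasDeriv e hs).add ih
    have he : (fun s' => evL (e :: l) s') = fun s' => ev1 e s' + evL l s' := by
      funext s'; simp [evL]
    have he2 : evL ((e :: l).flatMap d1) s = evL (d1 e) s + evL (l.flatMap d1) s := by
      simp [evL, List.flatMap_cons]
    rw [he, he2]
    exact h

lemma c_iter_hasDeriv (n : ℕ) (u : ℝ) :
    HasDerivAt (iteratedDeriv n c) (iteratedDeriv (n+1) c u) u := by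
  have hd : Differentiable ℝ (iteratedDeriv n c) :=
    c_contDiff.differentiable_iteratedDeriv n (by exact_mod_cast lt_top_iff_ne_top.mpr (by simp))
  rw [iteratedDeriv_succ]
  exact (hd u).hasDerivAt

lemma c_rep : ∀ n : ℕ, ∃ l, ∀ s : ℝ, 0 < s → iteratedDeriv (n+1) c s = evL l s := by
  intro n
  induction n with
  | zero =>
    refine ⟨[(-1/2, 0, false)], fun s hs => ?_⟩
    have hev : c =ᶠ[𝓝 s] (fun y => Real.cos (Real.sqrt y)) := by
      filter_upwards [eventually_gt_nhds hs] with y hy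
      exact c_eq_cos_sqrt hy.le
    have hu0 : Real.sqrt s ≠ 0 := (Real.sqrt_pos.mpr hs).ne'
    have hD : HasDerivAt (fun y => Real.cos (Real.sqrt y))
        (-Real.sin (Real.sqrt s) * (1/(2*Real.sqrt s))) s :=
      (Real.hasDerivAt_cos _).comp s (Real.hasDerivAt_sqrt hs.ne')
    rw [iteratedDeriv_one, hev.deriv_eq, hD.deriv]
    simp only [evL, ev1, d1, List.map, List.sum_cons, List.sum_nil, if_false,
      Bool.false_eq_true, add_zero, pow_zero]
    field_simp
  | succ n ih =>
    obtain ⟨l, hl⟩ := ih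
    refine ⟨l.flatMap d1, fun s hs => ?_⟩
    have hev : iteratedDeriv (n+1) c =ᶠ[𝓝 s] (fun s' => evL l s') := by
      filter_upwards [eventually_gt_nhds hs] with y hy
      exact hl y hy
    rw [iteratedDeriv_succ, hev.deriv_eq, (evL_hasDeriv l hs).deriv]

lemma ev1_bound (e : ℝ × ℕ × Bool) {s : ℝ} (hs : 1 ≤ s) : |ev1 e s| ≤ |e.1| := by
  obtain ⟨co, a, b⟩ := e
  have h0 : (0:ℝ) < s := lt_of_lt_of_le one_pos hs
  have h1 : |s⁻¹| ≤ 1 := by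
    rw [abs_of_nonneg (inv_nonneg.mpr h0.le)]
    exact inv_le_one_of_one_le₀ hs
  have h2 : |(Real.sqrt s)⁻¹| ≤ 1 := by
    rw [abs_of_nonneg (inv_nonneg.mpr (Real.sqrt_nonneg s))]
    exact inv_le_one_of_one_le₀ (Real.one_le_sqrt.mpr hs)
  cases b with
  | true =>
    calc |co * Real.cos (Real.sqrt s) * (s⁻¹)^(a+1)|
        = |co| * |Real.cos (Real.sqrt s)| * |s⁻¹|^(a+1) := by
          rw [abs_mul, abs_mul, abs_pow]
      _ ≤ |co| * 1 * 1 := by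
          gcongr
          · exact Real.abs_cos_le_one _
          · exact pow_le_one₀ (abs_nonneg _) h1
      _ = |co| := by ring
  | false =>
    calc |co * Real.sin (Real.sqrt s) * (Real.sqrt s)⁻¹ * (s⁻¹)^a|
        = |co| * |Real.sin (Real.sqrt s)| * |(Real.sqrt s)⁻¹| * |s⁻¹|^a := by
          rw [abs_mul, abs_mul, abs_mul, abs_pow]
      _ ≤ |co| * 1 * 1 * 1 := by
          gcongr <;> first
            | exact Real.abs_sin_le_one _
            | exact h2
            | exact pow_le_one₀ (abs_nonneg _) h1
      _ = |co| := by ring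

lemma evL_bound (l : List (ℝ × ℕ × Bool)) {s : ℝ} (hs : 1 ≤ s) :
    |evL l s| ≤ (l.map (fun e => |e.1|)).sum := by
  induction l with
  | nil => simp [evL]
  | cons e l ih =>
    have : evL (e :: l) s = ev1 e s + evL l s := by simp [evL]
    rw [this, List.map_cons, List.sum_cons]
    exact (abs_add_le _ _).trans (add_le_add (ev1_bound e hs) ih)

lemma c_bound (n : ℕ) : ∃ M : ℝ, 0 < M ∧ ∀ s : ℝ, 0 ≤ s → |iteratedDeriv n c s| ≤ M := by
  cases n with
  | zero =>
    refine ⟨1, one_pos, fun s hs => ?_⟩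
    rw [iteratedDeriv_zero, c_eq_cos_sqrt hs]
    exact Real.abs_cos_le_one _
  | succ n =>
    obtain ⟨l, hl⟩ := c_rep n
    have hcont : Continuous (iteratedDeriv (n+1) c) :=
      c_contDiff.continuous_iteratedDeriv (n+1) (by exact_mod_cast le_top)
    obtain ⟨C, hC⟩ := (isCompact_Icc (a := (0:ℝ)) (b := 1)).exists_bound_of_continuousOn
      hcont.continuousOn
    set Ml := (l.map (fun e => |e.1|)).sum with hMl
    have hMl0 : 0 ≤ Ml := List.sum_nonneg (by
      intro x hx
      obtain ⟨e, _, rfl⟩ := List.mem_map.mp hx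
      exact abs_nonneg _)
    refine ⟨max Ml C + 1, by positivity, fun s hs => ?_⟩
    rcases le_total s 1 with h1 | h1
    · have := hC s ⟨hs, h1⟩
      rw [Real.norm_eq_abs] at this
      calc |iteratedDeriv (n+1) c s| ≤ C := this
        _ ≤ max Ml C + 1 := by
            have := le_max_right Ml C
            linarith
    · rw [hl s (lt_of_lt_of_le one_pos h1)]
      calc |evL l s| ≤ Ml := evL_bound l h1
        _ ≤ max Ml C + 1 := by
            have := le_max_left Ml C
            linarith


def gI (n : ℕ) (s : ℝ) : ℝ :=
  (1/Real.pi) * ∫ θ in (0:ℝ)..Real.pi, (Real.sin θ)^(2*n) * iteratedDeriv n c (s * (Real.sin θ)^2)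

lemma c_iter_cont (n : ℕ) : Continuous (iteratedDeriv n c) :=
  c_contDiff.continuous_iteratedDeriv n (by exact_mod_cast le_top)

lemma gI_hasDeriv (n : ℕ) (s : ℝ) : HasDerivAt (gI n) (gI (n+1) s) s := by
  set F : ℝ → ℝ → ℝ := fun x θ => (Real.sin θ)^(2*n) * iteratedDeriv n c (x * (Real.sin θ)^2)
    with hF
  set F' : ℝ → ℝ → ℝ :=
    fun x θ => (Real.sin θ)^(2*(n+1)) * iteratedDeriv (n+1) c (x * (Real.sin θ)^2) with hF'
  have hFcont : ∀ x, Continuous (F x) := by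
    intro x
    exact (Real.continuous_sin.pow _).mul ((c_iter_cont n).comp (by fun_prop))
  have hF'cont : ∀ x, Continuous (F' x) := by
    intro x
    exact (Real.continuous_sin.pow _).mul ((c_iter_cont (n+1)).comp (by fun_prop))
  obtain ⟨K, hK⟩ := (isCompact_Icc (a := -(|s|+1)) (b := |s|+1)).exists_bound_of_continuousOn
    (c_iter_cont (n+1)).continuousOn
  have hK0 : 0 ≤ K := le_trans (norm_nonneg _) (hK 0 (by constructor <;> [nlinarith [abs_nonneg s]; nlinarith [abs_nonneg s]]))
  have key := intervalIntegral.hasDerivAt_integral_of_dominated_loc_of_deriv_le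
    (F := F) (F' := F') (x₀ := s) (a := (0:ℝ)) (b := Real.pi) (μ := MeasureTheory.volume)
    (bound := fun _ => K) (s := Metric.ball s 1) (Metric.ball_mem_nhds s one_pos)
    (Eventually.of_forall fun x => (hFcont x).aestronglyMeasurable)
    ((hFcont s).intervalIntegrable _ _)
    ((hF'cont s).aestronglyMeasurable)
    ?_ (intervalIntegrable_const) ?_
  · have h2 := key.2.const_mul (1/Real.pi)
    exact h2
  · refine Eventually.of_forall fun θ _ x hx => ?_
    have hxs : |x| ≤ |s| + 1 := by
      have := abs_sub_abs_le_abs_sub x s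
      have hd : |x - s| < 1 := by simpa [Real.dist_eq] using hx
      linarith
    have harg : x * Real.sin θ ^ 2 ∈ Set.Icc (-(|s|+1)) (|s|+1) := by
      have h1 : |x * Real.sin θ ^ 2| ≤ |s| + 1 := by
        rw [abs_mul]
        calc |x| * |Real.sin θ ^ 2| ≤ (|s|+1) * 1 := by
              apply mul_le_mul hxs ?_ (abs_nonneg _) (by positivity)
              rw [abs_pow]
              exact pow_le_one₀ (abs_nonneg _) (Real.abs_sin_le_one θ)
          _ = |s| + 1 := by ring
      constructor <;> [linarith [neg_abs_le (x * Real.sin θ ^ 2)]; linarith [le_abs_self (x * Real.sin θ ^ 2)]]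
    calc ‖F' x θ‖ = |Real.sin θ ^ (2*(n+1))| * |iteratedDeriv (n+1) c (x * Real.sin θ ^ 2)| := by
          rw [hF', Real.norm_eq_abs, abs_mul]
      _ ≤ 1 * K := by
          apply mul_le_mul ?_ (hK _ harg) (abs_nonneg _) one_pos.le
          rw [abs_pow]
          exact pow_le_one₀ (abs_nonneg _) (Real.abs_sin_le_one θ)
      _ = K := one_mul K
  · refine Eventually.of_forall fun θ _ x _ => ?_
    have hbase : HasDerivAt (fun x : ℝ => x * Real.sin θ ^ 2) (Real.sin θ ^ 2) x :=
      hasDerivAt_mul_const _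
    have hcomp := (c_iter_hasDeriv n (x * Real.sin θ ^ 2)).comp x hbase
    have h := hcomp.const_mul ((Real.sin θ)^(2*n))
    refine h.congr_deriv ?_
    simp only [hF']
    ring
  
lemma gI_bound (n : ℕ) : ∃ M : ℝ, 0 < M ∧ ∀ s : ℝ, 0 ≤ s → |gI n s| ≤ M := by
  obtain ⟨Mc, hMc0, hMc⟩ := c_bound n
  refine ⟨Mc, hMc0, fun s hs => ?_⟩
  have hbd : ∀ θ ∈ Set.uIoc (0:ℝ) Real.pi,
      ‖(Real.sin θ)^(2*n) * iteratedDeriv n c (s * (Real.sin θ)^2)‖ ≤ Mc := by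
    intro θ _
    rw [Real.norm_eq_abs, abs_mul]
    calc |Real.sin θ ^ (2*n)| * |iteratedDeriv n c (s * Real.sin θ ^ 2)|
        ≤ 1 * Mc := by
          apply mul_le_mul ?_ (hMc _ (by positivity)) (abs_nonneg _) one_pos.le
          rw [abs_pow]
          exact pow_le_one₀ (abs_nonneg _) (Real.abs_sin_le_one θ)
      _ = Mc := one_mul Mc
  have := intervalIntegral.norm_integral_le_of_norm_le_const hbd
  rw [gI, abs_mul, abs_of_nonneg (by positivity : (0:ℝ) ≤ 1/Real.pi)]
  rw [sub_zero] at this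
  rw [Real.norm_eq_abs] at this
  calc (1/Real.pi) * |∫ θ in (0:ℝ)..Real.pi, (Real.sin θ)^(2*n) * iteratedDeriv n c (s * (Real.sin θ)^2)|
      ≤ (1/Real.pi) * (Mc * |Real.pi|) := by
        apply mul_le_mul_of_nonneg_left ?_ (by positivity)
        exact this
    _ = Mc := by
        rw [abs_of_nonneg Real.pi_pos.le]
        field_simp
 

def gcoef : ℕ → ℝ := fun k => (-1)^k / (4^k * (k.factorial)^2)

def gps : FormalMultilinearSeries ℝ ℝ ℝ := FormalMultilinearSeries.ofScalars ℝ gcoef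

def g : ℝ → ℝ := gps.sum

lemma gcoef_norm (k : ℕ) : ‖gcoef k‖ = 1 / (4^k * (k.factorial)^2) := by
  have : (0:ℝ) < 4^k * (k.factorial)^2 := by positivity
  simp [gcoef, abs_div, abs_pow, abs_of_pos this]

lemma gps_radius : gps.radius = ⊤ := by
  apply FormalMultilinearSeries.ofScalars_radius_eq_top_of_tendsto
  · exact Eventually.of_forall fun n => by
      simp only [gcoef]
      positivity
  · apply squeeze_zero (fun n => by positivity) (g := fun n : ℕ => 1 / (n+1 : ℝ))
    · intro k
      rw [gcoef_norm, gcoef_norm]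
      have hf : (0:ℝ) < (k.factorial : ℝ) := by exact_mod_cast k.factorial_pos
      have e2 : ((k+1).factorial : ℝ) = (k+1) * k.factorial := by
        rw [Nat.factorial_succ]; push_cast; ring
      rw [Nat.succ_eq_add_one, e2]
      rw [div_le_div_iff₀ (by positivity) (by positivity), one_mul,
        div_mul_eq_mul_div, one_mul, div_le_div_iff₀ (by positivity) (by positivity), one_mul]
      have h4 : (0:ℝ) < 4^k := by positivity
      have h5 : ((k:ℝ)+1) ≤ 4*((k:ℝ)+1)^2 := by nlinarith [Nat.cast_nonneg (α := ℝ) k]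
      have h6 : (0:ℝ) ≤ 4^k * ((k.factorial:ℕ):ℝ)^2 := by positivity
      have h7 := mul_le_mul_of_nonneg_right h5 h6
      have h8 : (4:ℝ)^(k+1) = 4^k*4 := pow_succ 4 k
      nlinarith [h7]
    · exact tendsto_one_div_add_atTop_nhds_zero_nat

lemma g_hasFPS : HasFPowerSeriesOnBall g gps 0 ⊤ := by
  have := gps.hasFPowerSeriesOnBall (by rw [gps_radius]; exact ENNReal.zero_lt_top)
  rwa [gps_radius] at this

lemma g_hasSum (y : ℝ) : HasSum (fun k => gcoef k * y^k) (g y) := by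
  have h := g_hasFPS.hasSum (y := y) (by simp)
  rw [zero_add] at h
  have h2 : (fun n => gps n (fun _ => y)) = fun n => gcoef n * y^n := by
    funext n
    rw [gps, FormalMultilinearSeries.ofScalars_apply_eq, smul_eq_mul]
  rwa [h2] at h

lemma g_analytic : AnalyticOnNhd ℝ g Set.univ := by
  have := g_hasFPS.analyticOnNhd
  simpa using this

lemma prod_eq (k : ℕ) : ∏ i ∈ Finset.range k, ((2*(i:ℝ)+1)/(2*(i:ℝ)+2))
    = ((2*k).factorial : ℝ) / (4^k * ((k.factorial :ℕ):ℝ)^2) := by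
  induction k with
  | zero => simp
  | succ k ih =>
    rw [Finset.prod_range_succ, ih]
    have e1 : ((2*(k+1)).factorial :ℝ) = (2*(k:ℝ)+2) * ((2*(k:ℝ)+1) * ((2*k).factorial :ℕ)) := by
      have h2 : 2*(k+1) = (2*k+1) + 1 := by ring
      rw [h2, Nat.factorial_succ, Nat.factorial_succ]
      push_cast; ring
    have e2 : (((k+1).factorial :ℕ):ℝ) = ((k:ℝ)+1) * (k.factorial :ℕ) := by
      rw [Nat.factorial_succ]; push_cast; ring
    rw [e1, e2]
    have hf : (0:ℝ) < ((k.factorial :ℕ):ℝ) := by exact_mod_cast k.factorial_pos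
    have h4 : (0:ℝ) < 4^k := by positivity
    field_simp
    ring

lemma wallis (k : ℕ) : ∫ θ in (0:ℝ)..Real.pi, (Real.sin θ)^(2*k)
    = Real.pi * (((2*k).factorial :ℕ):ℝ) / (4^k * ((k.factorial :ℕ):ℝ)^2) := by
  rw [integral_sin_pow_even, prod_eq]
  ring

lemma summable_cs (s : ℝ) : Summable (fun k => ‖cseq k‖ * |s|^k) := by
  refine Summable.of_nonneg_of_le (fun k => by positivity) (fun k => ?_)
    (Real.summable_pow_div_factorial |s|)
  rw [cseq_norm]
  rw [div_mul_eq_mul_div, one_mul]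
  apply div_le_div_of_nonneg_left (by positivity) (by exact_mod_cast k.factorial_pos)
  exact_mod_cast Nat.factorial_le (by omega)

lemma g_eq_gI0 (s : ℝ) : gI 0 s = g s := by
  have hint0 : gI 0 s = (1/Real.pi) * ∫ θ in (0:ℝ)..Real.pi, c (s * (Real.sin θ)^2) := by
    simp [gI, iteratedDeriv_zero]
  set f : ℕ → ℝ → ℝ := fun k θ => (cseq k * s^k) * (Real.sin θ)^(2*k) with hf
  have hterm : ∀ θ : ℝ, c (s * (Real.sin θ)^2) = ∑' k, f k θ := by
    intro θ
    rw [← (c_hasSum (s * (Real.sin θ)^2)).tsum_eq]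
    apply tsum_congr
    intro k
    simp only [hf]
    rw [mul_pow, ← pow_mul]
    ring
  have hmeas : MeasurableSet (Set.Ioc (0:ℝ) Real.pi) := measurableSet_Ioc
  have hintk : ∀ k, MeasureTheory.IntegrableOn (f k) (Set.Ioc (0:ℝ) Real.pi) := by
    intro k
    apply Continuous.integrableOn_Ioc
    fun_prop
  have hintnorm : ∀ k, MeasureTheory.IntegrableOn (fun θ => ‖f k θ‖) (Set.Ioc (0:ℝ) Real.pi) :=
    fun k => (hintk k).norm
  have hsumint : Summable (fun k => ∫ θ in Set.Ioc (0:ℝ) Real.pi, ‖f k θ‖) := by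
    refine Summable.of_nonneg_of_le
      (fun k => MeasureTheory.integral_nonneg (fun θ => norm_nonneg _))
      (fun k => ?_) ((summable_cs s).mul_right Real.pi)
    calc ∫ θ in Set.Ioc (0:ℝ) Real.pi, ‖f k θ‖
        ≤ ∫ _ in Set.Ioc (0:ℝ) Real.pi, (‖cseq k‖ * |s|^k) := by
          apply MeasureTheory.setIntegral_mono_on (hintnorm k)
            (MeasureTheory.integrableOn_const (by simp))
            hmeas
          intro θ _
          rw [hf]
          simp only [Real.norm_eq_abs, abs_mul, abs_pow]
          calc |cseq k| * |s|^k * |Real.sin θ|^(2*k) ≤ |cseq k| * |s|^k * 1 := by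
                apply mul_le_mul_of_nonneg_left ?_ (by positivity)
                exact pow_le_one₀ (abs_nonneg _) (Real.abs_sin_le_one θ)
            _ = ‖cseq k‖ * |s|^k := by rw [mul_one, Real.norm_eq_abs]
      _ = (‖cseq k‖ * |s|^k) * Real.pi := by
          rw [MeasureTheory.setIntegral_const]
          rw [Real.volume_real_Ioc_of_le Real.pi_pos.le, sub_zero]
          rw [smul_eq_mul, mul_comm]
  have hswap := MeasureTheory.integral_tsum_of_summable_integral_norm hintk hsumint
  have e3 : ∫ θ in (0:ℝ)..Real.pi, c (s * (Real.sin θ)^2)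
      = ∑' k, ∫ θ in Set.Ioc (0:ℝ) Real.pi, f k θ := by
    rw [intervalIntegral.integral_of_le Real.pi_pos.le]
    have heq : ∫ θ in Set.Ioc (0:ℝ) Real.pi, c (s * (Real.sin θ)^2)
        = ∫ θ in Set.Ioc (0:ℝ) Real.pi, ∑' k, f k θ :=
      MeasureTheory.integral_congr_ae (Eventually.of_forall fun θ => hterm θ)
    rw [heq]
    exact hswap.symm
  have e4 : ∀ k, ∫ θ in Set.Ioc (0:ℝ) Real.pi, f k θ
      = Real.pi * (gcoef k * s^k) := by
    intro k
    rw [← intervalIntegral.integral_of_le Real.pi_pos.le]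
    have : ∫ θ in (0:ℝ)..Real.pi, f k θ
        = (cseq k * s^k) * ∫ θ in (0:ℝ)..Real.pi, (Real.sin θ)^(2*k) := by
      rw [← intervalIntegral.integral_const_mul]
    rw [this, wallis]
    have hfk : (0:ℝ) < (((2*k).factorial :ℕ):ℝ) := by exact_mod_cast (2*k).factorial_pos
    rw [cseq, gcoef]
    field_simp
  rw [hint0, e3]
  have e5 : (∑' k, ∫ θ in Set.Ioc (0:ℝ) Real.pi, f k θ) = Real.pi * g s := by
    calc (∑' k, ∫ θ in Set.Ioc (0:ℝ) Real.pi, f k θ) = ∑' k, Real.pi * (gcoef k * s^k) := by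
          congr 1; funext k; exact e4 k
      _ = Real.pi * ∑' k, (gcoef k * s^k) := tsum_mul_left
      _ = Real.pi * g s := by rw [(g_hasSum s).tsum_eq]
  rw [e5]
  field_simp

lemma gI0_eq_g : gI 0 = g := funext g_eq_gI0

lemma gI0_analytic : AnalyticOnNhd ℝ (gI 0) Set.univ := by
  rw [gI0_eq_g]; exact g_analytic


def E2 (m : ℝ) (e : ℝ × ℕ × ℕ × ℕ) (x t : ℝ) : ℝ :=
  e.1 * x ^ e.2.1 * t ^ e.2.2.1 * gI e.2.2.2 (m^2 * (t^2 - x^2))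

def F2 (m : ℝ) (l : List (ℝ × ℕ × ℕ × ℕ)) (x t : ℝ) : ℝ :=
  (l.map (fun e => E2 m e x t)).sum

def dT (m : ℝ) : (ℝ × ℕ × ℕ × ℕ) → List (ℝ × ℕ × ℕ × ℕ) := fun e =>
  [((e.2.2.1 : ℝ) * e.1, e.2.1, e.2.2.1 - 1, e.2.2.2), (2*m^2*e.1, e.2.1, e.2.2.1 + 1, e.2.2.2 + 1)]

def dX (m : ℝ) : (ℝ × ℕ × ℕ × ℕ) → List (ℝ × ℕ × ℕ × ℕ) := fun e =>
  [((e.2.1 : ℝ) * e.1, e.2.1 - 1, e.2.2.1, e.2.2.2), (-(2*m^2)*e.1, e.2.1 + 1, e.2.2.1, e.2.2.2 + 1)]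

lemma E2_hasDerivT (m : ℝ) (e : ℝ × ℕ × ℕ × ℕ) (x t : ℝ) :
    HasDerivAt (fun t' => E2 m e x t') (F2 m (dT m e) x t) t := by
  obtain ⟨co, a, b, i⟩ := e
  have hq : HasDerivAt (fun t' : ℝ => m^2*(t'^2 - x^2)) (m^2 * (2*t)) t := by
    have h := ((hasDerivAt_pow 2 t).sub_const (x^2)).const_mul (m^2)
    simpa using h
  have hg : HasDerivAt (fun t' => gI i (m^2*(t'^2 - x^2)))
      (gI (i+1) (m^2*(t^2 - x^2)) * (m^2 * (2*t))) t :=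
    by have := (gI_hasDeriv i (m^2*(t^2 - x^2))).comp t hq; exact this
  have hp := hasDerivAt_pow b t
  have H := (hp.mul hg).const_mul (co * x^a)
  simp only [Pi.mul_apply, ← mul_assoc] at H
  refine H.congr_deriv ?_
  simp only [F2, dT, E2, List.map, List.sum_cons, List.sum_nil, add_zero]
  push_cast
  rcases Nat.eq_zero_or_pos b with hb | hb
  · subst hb; simp; ring
  · obtain ⟨b', rfl⟩ : ∃ b', b = b' + 1 := ⟨b - 1, (Nat.succ_pred_eq_of_pos hb).symm⟩
    simp only [Nat.add_sub_cancel]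
    push_cast
    ring

lemma E2_hasDerivX (m : ℝ) (e : ℝ × ℕ × ℕ × ℕ) (x t : ℝ) :
    HasDerivAt (fun x' => E2 m e x' t) (F2 m (dX m e) x t) x := by
  obtain ⟨co, a, b, i⟩ := e
  have hq : HasDerivAt (fun x' : ℝ => m^2*(t^2 - x'^2)) (m^2 * (-(2*x))) x := by
    have h := (((hasDerivAt_pow 2 x)).const_sub (t^2)).const_mul (m^2)
    simpa using h
  have hg : HasDerivAt (fun x' => gI i (m^2*(t^2 - x'^2)))
      (gI (i+1) (m^2*(t^2 - x^2)) * (m^2 * (-(2*x)))) x :=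
    by have := (gI_hasDeriv i (m^2*(t^2 - x^2))).comp x hq; exact this
  have hp := hasDerivAt_pow a x
  have H := (hp.mul hg).const_mul co
  have hfun : (fun x' => E2 m (co, a, b, i) x' t)
      = fun x' => co * (x'^a * gI i (m^2*(t^2 - x'^2))) * t^b := by
    funext x'; simp only [E2]; ring
  rw [hfun]
  have H2 := H.mul_const (t^b)
  refine H2.congr_deriv ?_
  simp only [F2, dX, E2, List.map, List.sum_cons, List.sum_nil, add_zero]
  push_cast
  rcases Nat.eq_zero_or_pos a with ha | ha
  · subst ha; simp; ring
  · obtain ⟨a', rfl⟩ : ∃ a', a = a' + 1 := ⟨a - 1, (Nat.succ_pred_eq_of_pos ha).symm⟩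
    simp only [Nat.add_sub_cancel]
    push_cast
    ring

lemma F2_hasDerivT (m : ℝ) (l : List (ℝ × ℕ × ℕ × ℕ)) (x t : ℝ) :
    HasDerivAt (fun t' => F2 m l x t') (F2 m (l.flatMap (dT m)) x t) t := by
  induction l with
  | nil => simpa [F2] using hasDerivAt_const t (0:ℝ)
  | cons e l ih =>
    have h := (E2_hasDerivT m e x t).add ih
    have he : (fun t' => F2 m (e :: l) x t') = fun t' => E2 m e x t' + F2 m l x t' := by
      funext t'; simp [F2]
    have he2 : F2 m ((e :: l).flatMap (dT m)) x t = F2 m (dT m e) x t + F2 m (l.flatMap (dT m)) x t := by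
      simp [F2, List.flatMap_cons]
    rw [he, he2]
    exact h

lemma F2_hasDerivX (m : ℝ) (l : List (ℝ × ℕ × ℕ × ℕ)) (x t : ℝ) :
    HasDerivAt (fun x' => F2 m l x' t) (F2 m (l.flatMap (dX m)) x t) x := by
  induction l with
  | nil => simpa [F2] using hasDerivAt_const x (0:ℝ)
  | cons e l ih =>
    have h := (E2_hasDerivX m e x t).add ih
    have he : (fun x' => F2 m (e :: l) x' t) = fun x' => E2 m e x' t + F2 m l x' t := by
      funext x'; simp [F2]
    have he2 : F2 m ((e :: l).flatMap (dX m)) x t = F2 m (dX m e) x t + F2 m (l.flatMap (dX m)) x t := by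
      simp [F2, List.flatMap_cons]
    rw [he, he2]
    exact h

lemma L1 (m : ℝ) (κ : ℕ) : ∃ l : List (ℝ × ℕ × ℕ × ℕ),
    (∀ e ∈ l, e.2.1 + e.2.2.1 ≤ κ) ∧
    ∀ x t : ℝ, iteratedDeriv κ (fun t' => gI 0 (m^2*(t'^2 - x^2))) t = F2 m l x t := by
  induction κ with
  | zero =>
    refine ⟨[(1, 0, 0, 0)], by simp, fun x t => ?_⟩
    simp [iteratedDeriv_zero, F2, E2]
  | succ κ ih =>
    obtain ⟨l, hw, hl⟩ := ih
    refine ⟨l.flatMap (dT m), ?_, fun x t => ?_⟩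
    · intro e' he'
      obtain ⟨e, he, he2⟩ := List.mem_flatMap.mp he'
      have := hw e he
      simp only [dT, List.mem_cons, List.mem_singleton] at he2
      rcases he2 with rfl | rfl | h
      · simp only
        omega
      · simp only
        omega
      · exact absurd h List.not_mem_nil
    · rw [iteratedDeriv_succ]
      have hs : iteratedDeriv κ (fun t' => gI 0 (m^2*(t'^2 - x^2))) = fun t' => F2 m l x t' :=
        funext fun t' => hl x t'
      rw [hs, (F2_hasDerivT m l x t).deriv]

lemma L2 (m : ℝ) (j : ℕ) : ∀ (n : ℕ) (l : List (ℝ × ℕ × ℕ × ℕ)),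
    (∀ e ∈ l, e.2.1 + e.2.2.1 ≤ n) →
    ∃ l' : List (ℝ × ℕ × ℕ × ℕ),
    (∀ e ∈ l', e.2.1 + e.2.2.1 ≤ n + j) ∧
    ∀ x t : ℝ, iteratedDeriv j (fun x' => F2 m l x' t) x = F2 m l' x t := by
  induction j with
  | zero =>
    intro n l hw
    exact ⟨l, by simpa using hw, fun x t => by simp [iteratedDeriv_zero]⟩
  | succ j ih =>
    intro n l hw
    obtain ⟨l', hw', hl'⟩ := ih n l hw
    refine ⟨l'.flatMap (dX m), ?_, fun x t => ?_⟩
    · intro e' he'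
      obtain ⟨e, he, he2⟩ := List.mem_flatMap.mp he'
      have := hw' e he
      simp only [dX, List.mem_cons, List.mem_singleton] at he2
      rcases he2 with rfl | rfl | h
      · simp only
        omega
      · simp only
        omega
      · exact absurd h List.not_mem_nil
    · rw [iteratedDeriv_succ]
      have hs : iteratedDeriv j (fun x' => F2 m l x' t) = fun x' => F2 m l' x' t :=
        funext fun x' => hl' x' t
      rw [hs, (F2_hasDerivX m l' x t).deriv]

lemma F2_bound (m : ℝ) (l : List (ℝ × ℕ × ℕ × ℕ)) (n : ℕ)
    (hw : ∀ e ∈ l, e.2.1 + e.2.2.1 ≤ n) :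
    ∃ C : ℝ, 0 < C ∧ ∀ x t : ℝ, |x| < t → |F2 m l x t| ≤ C * (1+t)^n := by
  induction l with
  | nil =>
    refine ⟨1, one_pos, fun x t hxt => ?_⟩
    have ht : 0 < t := lt_of_le_of_lt (abs_nonneg x) hxt
    have : (0:ℝ) < (1+t)^n := by positivity
    simp [F2]
    positivity
  | cons e l ih =>
    obtain ⟨C, hC0, hC⟩ := ih (fun e' he' => hw e' (List.mem_cons_of_mem _ he'))
    obtain ⟨co, a, b, i⟩ := e
    obtain ⟨M, hM0, hM⟩ := gI_bound i
    have hwe := hw (co, a, b, i) List.mem_cons_self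
    simp only at hwe
    refine ⟨(|co| + 1) * M + C, by positivity, fun x t hxt => ?_⟩
    have ht : 0 < t := lt_of_le_of_lt (abs_nonneg x) hxt
    have ht1 : (1:ℝ) ≤ 1 + t := by linarith
    have hpos : (0:ℝ) < (1+t)^n := by positivity
    have hxt2 : x^2 ≤ t^2 := by nlinarith [abs_nonneg x, le_abs_self x, neg_abs_le x]
    have hA : 0 ≤ m^2 * (t^2 - x^2) := by nlinarith [sq_nonneg m]
    have hE : |E2 m (co, a, b, i) x t| ≤ (|co| + 1) * M * (1+t)^n := by
      have h1 : |E2 m (co, a, b, i) x t| = |co| * |x|^a * t^b * |gI i (m^2*(t^2 - x^2))| := by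
        simp only [E2, abs_mul, abs_pow, abs_of_pos ht]
      rw [h1]
      calc |co| * |x|^a * t^b * |gI i (m^2*(t^2 - x^2))|
          ≤ |co| * t^a * t^b * M := by
            gcongr <;> first
              | exact abs_nonneg x
              | exact hxt.le
              | exact hM _ hA
              | positivity
        _ = |co| * M * t^(a+b) := by rw [pow_add]; ring
        _ ≤ (|co| + 1) * M * (1+t)^n := by
            have h2 : t^(a+b) ≤ (1+t)^(a+b) := by
              gcongr <;> first | linarith | positivity
            have h3 : (1+t)^(a+b) ≤ (1+t)^n := pow_le_pow_right₀ ht1 hwe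
            have h4 : t^(a+b) ≤ (1+t)^n := le_trans h2 h3
            have h5 : |co| * M ≤ (|co| + 1) * M := by nlinarith [abs_nonneg co]
            calc |co| * M * t^(a+b) ≤ |co| * M * (1+t)^n := by
                  apply mul_le_mul_of_nonneg_left h4 (by positivity)
              _ ≤ (|co| + 1) * M * (1+t)^n := by
                  apply mul_le_mul_of_nonneg_right h5 (by positivity)
    have hsplit : F2 m ((co, a, b, i) :: l) x t = E2 m (co, a, b, i) x t + F2 m l x t := by
      simp [F2]
    rw [hsplit]
    calc |E2 m (co, a, b, i) x t + F2 m l x t|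
        ≤ |E2 m (co, a, b, i) x t| + |F2 m l x t| := abs_add_le _ _
      _ ≤ (|co| + 1) * M * (1+t)^n + C * (1+t)^n := add_le_add hE (hC x t hxt)
      _ = ((|co| + 1) * M + C) * (1+t)^n := by ring

lemma iter_congr {f h : ℝ → ℝ} {s : Set ℝ} (hs : IsOpen s) (hfh : Set.EqOn f h s) (n : ℕ) :
    Set.EqOn (iteratedDeriv n f) (iteratedDeriv n h) s := by
  induction n with
  | zero => simpa [iteratedDeriv_zero] using hfh
  | succ n ih =>
    intro y hy
    rw [iteratedDeriv_succ, iteratedDeriv_succ]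
    exact Filter.EventuallyEq.deriv_eq (Filter.eventuallyEq_of_mem (hs.mem_nhds hy) ih)

lemma B_eq (m : ℝ) (J₀ : ℝ → ℝ)
    (hJ : ∀ z : ℝ, J₀ z = (1 / Real.pi) * ∫ θ in (0:ℝ)..Real.pi, Real.cos (z * Real.sin θ))
    (B : ℝ → ℝ → ℝ)
    (hB : ∀ x t : ℝ, B x t = J₀ (m * Real.sqrt (t^2 - x^2)))
    {x t : ℝ} (hxt : |x| < t) : B x t = gI 0 (m^2 * (t^2 - x^2)) := by
  have ht : 0 < t := lt_of_le_of_lt (abs_nonneg x) hxt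
  have hxt2 : x^2 ≤ t^2 := by nlinarith [abs_nonneg x, le_abs_self x, neg_abs_le x]
  have hX : 0 ≤ t^2 - x^2 := by linarith
  rw [hB, hJ]
  have h0 : gI 0 (m^2 * (t^2 - x^2))
      = (1/Real.pi) * ∫ θ in (0:ℝ)..Real.pi, c ((m^2 * (t^2 - x^2)) * (Real.sin θ)^2) := by
    simp [gI, iteratedDeriv_zero]
  rw [h0]
  congr 1
  apply intervalIntegral.integral_congr
  intro θ _
  have : (m * Real.sqrt (t^2 - x^2) * Real.sin θ)^2 = (m^2 * (t^2 - x^2)) * (Real.sin θ)^2 := by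
    rw [mul_pow, mul_pow, Real.sq_sqrt hX]
  show Real.cos (m * Real.sqrt (t^2 - x^2) * Real.sin θ)
      = c ((m^2 * (t^2 - x^2)) * (Real.sin θ)^2)
  rw [← this, c_sq]

end BesselAux

open BesselAux in
/-- the function `B(x,t) = J₀(m√(t²−x²))`, where
`J₀(z) = (1/π)∫₀^π cos(z sin θ)dθ` is the Bessel function of order zero, is smooth on
the region `{|x| < t}`, and every mixed partial derivative `∂_x^j ∂_t^κ̃ B` is bounded
there by `C(1+t)^{j+κ̃}`. -/
theorem bessel_kernel_derivative_bounds
    (m : ℝ) (hm : 0 < m)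
    (J₀ : ℝ → ℝ)
    (hJ : ∀ z : ℝ, J₀ z = (1 / Real.pi) * ∫ θ in (0:ℝ)..Real.pi, Real.cos (z * Real.sin θ))
    (B : ℝ → ℝ → ℝ)
    (hB : ∀ x t : ℝ, B x t = J₀ (m * Real.sqrt (t^2 - x^2))) :
    ContDiffOn ℝ (⊤ : ℕ∞) (fun p : ℝ × ℝ => B p.1 p.2) {p : ℝ × ℝ | |p.1| < p.2} ∧
    ∀ j κt : ℕ, ∃ C : ℝ, 0 < C ∧ ∀ x t : ℝ, |x| < t →
      |iteratedDeriv j (fun x' : ℝ => iteratedDeriv κt (fun t' : ℝ => B x' t') t) x|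
        ≤ C * (1 + t)^(j + κt) := by
  constructor
  · -- smoothness
    have hpoly : AnalyticOnNhd ℝ (fun p : ℝ × ℝ => m^2*(p.2^2 - p.1^2)) Set.univ := by
      intro p _
      exact analyticAt_const.mul ((analyticAt_snd.pow 2).sub (analyticAt_fst.pow 2))
    have hG : AnalyticOnNhd ℝ (fun p : ℝ × ℝ => gI 0 (m^2*(p.2^2 - p.1^2))) Set.univ := by
      intro p hp
      exact (gI0_analytic _ (Set.mem_univ _)).comp (hpoly p hp)
    have hGc : ContDiff ℝ (⊤ : ℕ∞) (fun p : ℝ × ℝ => gI 0 (m^2*(p.2^2 - p.1^2))) := hG.contDiff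
    apply hGc.contDiffOn.congr
    intro p hp
    exact B_eq m J₀ hJ B hB hp
  · -- derivative bounds
    intro j κt
    obtain ⟨l, hwl, hl⟩ := L1 m κt
    obtain ⟨l', hwl', hl'⟩ := L2 m j κt l hwl
    obtain ⟨C, hC0, hC⟩ := F2_bound m l' (κt + j) hwl'
    refine ⟨C, hC0, fun x t hxt => ?_⟩
    have ht : 0 < t := lt_of_le_of_lt (abs_nonneg x) hxt
    have hS : IsOpen {x' : ℝ | |x'| < t} := isOpen_lt continuous_abs continuous_const
    have hEq : Set.EqOn (fun x' => iteratedDeriv κt (fun t' : ℝ => B x' t') t)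
        (fun x' => iteratedDeriv κt (fun t' : ℝ => gI 0 (m^2*(t'^2 - x'^2))) t)
        {x' : ℝ | |x'| < t} := by
      intro x' hx'
      have hopen : IsOpen {t' : ℝ | |x'| < t'} := isOpen_lt continuous_const continuous_id
      have hBG : Set.EqOn (fun t' : ℝ => B x' t') (fun t' : ℝ => gI 0 (m^2*(t'^2 - x'^2)))
          {t' : ℝ | |x'| < t'} := fun t' ht' => B_eq m J₀ hJ B hB ht'
      exact iter_congr hopen hBG κt hx'
    have h1 : iteratedDeriv j (fun x' : ℝ => iteratedDeriv κt (fun t' : ℝ => B x' t') t) x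
        = iteratedDeriv j
          (fun x' : ℝ => iteratedDeriv κt (fun t' : ℝ => gI 0 (m^2*(t'^2 - x'^2))) t) x :=
      iter_congr hS hEq j hxt
    have h2 : (fun x' : ℝ => iteratedDeriv κt (fun t' : ℝ => gI 0 (m^2*(t'^2 - x'^2))) t)
        = fun x' : ℝ => F2 m l x' t := funext fun x' => hl x' t
    rw [h1, h2, hl' x t]
    have := hC x t hxt
    rwa [Nat.add_comm κt j] at this
end
end
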